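/- Let Q ∈ ℝ^{n×n} be symmetric positive definite, A ∈ ℝ^{n×n}, B ∈ ℝ^{n×m}, R ∈ ℝ^{m×m} symmetric positive definite, and ū ∈ ℝ^m. Suppose there exist scalars α, β ≥ 0 such that −E − αF − βS ⪰ 0, where E = [[AᵀQ+QA, 0, QB],[0, 0, 0],[BᵀQ, 0, 0]], F = [[Q, 0, 0],[0, −1, 0],[0, 0, 0]], and S = [[0, 0, 0],[0, 1−ūᵀRū, ūᵀR],[0, Rū, −R]]. Then for every t₀ ∈ ℝ, every differentiable function ζ : ℝ → ℝ^n, and every function u_c : ℝ → ℝ^m such that for all t ≥ t₀ one has ζ′(t) = Aζ(t) + Bu_c(t) and (u_c(t)−ū)ᵀR(u_c(t)−ū) ≤ 1, the implication holds: if ζ(t₀)ᵀQζ(t₀) ≤ 1 then ζ(t)ᵀQζ(t) ≤ 1 for all t ≥ t₀. -/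

import Mathlib

open Matrix

/-- 3×3 block matrix. -/
def blk3 {α β γ : Type*} (M11 : Matrix α α ℝ) (M12 : Matrix α β ℝ) (M13 : Matrix α γ ℝ)
    (M21 : Matrix β α ℝ) (M22 : Matrix β β ℝ) (M23 : Matrix β γ ℝ)
    (M31 : Matrix γ α ℝ) (M32 : Matrix γ β ℝ) (M33 : Matrix γ γ ℝ) :
    Matrix (α ⊕ (β ⊕ γ)) (α ⊕ (β ⊕ γ)) ℝ :=
  Matrix.fromBlocks M11 (Matrix.of fun i j => Sum.elim (M12 i) (M13 i) j)
    (Matrix.of fun i j => Sum.elim (fun b => M21 b j) (fun c => M31 c j) i)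
    (Matrix.fromBlocks M22 M23 M32 M33)

/-- 1×1 matrix with entry `c`. -/
def sc (c : ℝ) : Matrix (Fin 1) (Fin 1) ℝ := Matrix.of fun _ _ => c

/-- column matrix of a vector. -/
def colV {α : Type*} (v : α → ℝ) : Matrix α (Fin 1) ℝ := Matrix.of fun i _ => v i

/-- row matrix of a vector. -/
def rowV {α : Type*} (v : α → ℝ) : Matrix (Fin 1) α ℝ := Matrix.of fun _ j => v j

/-! The LMI is an S-procedure certificate. Testing it on the vector `(x, 1, u)` gives
`V' ≤ α (1 - V) - β (1 - (u - ū)ᵀ R (u - ū))` for the Lyapunov function `V = ζᵀ Q ζ` along any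
trajectory, so `V' ≤ α (1 - V)` while the input stays in its ellipsoid; by Grönwall's inequality
`V - 1` cannot become positive once it is nonpositive. -/

theorem HasDerivAt.dotProduct {𝕜 ι : Type*} [NontriviallyNormedField 𝕜] [Fintype ι]
    {f g : 𝕜 → ι → 𝕜} {f' g' : ι → 𝕜} {t : 𝕜}
    (hf : HasDerivAt f f' t) (hg : HasDerivAt g g' t) :
    HasDerivAt (fun s => f s ⬝ᵥ g s) (f' ⬝ᵥ g t + f t ⬝ᵥ g') t := by
  simp only [_root_.dotProduct, ← Finset.sum_add_distrib]
  exact HasDerivAt.fun_sum fun i _ => (hasDerivAt_pi.mp hf i).mul (hasDerivAt_pi.mp hg i)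

theorem HasDerivAt.const_mulVec {𝕜 ι κ : Type*} [NontriviallyNormedField 𝕜] [Fintype κ]
    (M : Matrix ι κ 𝕜) {f : 𝕜 → κ → 𝕜} {f' : κ → 𝕜} {t : 𝕜} (hf : HasDerivAt f f' t) :
    HasDerivAt (fun s => M *ᵥ f s) (M *ᵥ f') t := by
  refine hasDerivAt_pi.mpr fun i => ?_
  simp only [mulVec, _root_.dotProduct]
  exact HasDerivAt.fun_sum fun j _ => (hasDerivAt_pi.mp hf j).const_mul (M i j)

theorem le_of_hasDerivAt_le_mul_sub {V V' : ℝ → ℝ} {t₀ α c : ℝ}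
    (hV : ∀ t, t₀ ≤ t → HasDerivAt V (V' t) t) (hV' : ∀ t, t₀ ≤ t → V' t ≤ α * (c - V t))
    (h₀ : V t₀ ≤ c) {t : ℝ} (ht : t₀ ≤ t) : V t ≤ c := by
  have hbound := le_gronwallBound_of_liminf_deriv_right_le (f := fun s => V s - c) (f' := V')
    (K := -α) (ε := 0) (b := t)
    (fun s hs => ((hV s hs.1).continuousAt.sub continuousAt_const).continuousWithinAt)
    (fun s hs _ hr => ((hV s hs.1).sub_const c).hasDerivWithinAt.liminf_right_slope_le hr)
    le_rfl (fun s hs => by linarith [hV' s hs.1]) t ⟨ht, le_rfl⟩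
  rw [gronwallBound_ε0] at hbound
  exact sub_nonpos.1 <|
    hbound.trans (mul_nonpos_of_nonpos_of_nonneg (sub_nonpos.2 h₀) (Real.exp_nonneg _))

section BlockQuadraticForms

variable {ι κ : Type*} [Fintype ι] [Fintype κ]

lemma dotProduct_blk3_mulVec {ι' : Type*} [Fintype ι']
    (M11 : Matrix ι ι ℝ) (M12 : Matrix ι ι' ℝ) (M13 : Matrix ι κ ℝ)
    (M21 : Matrix ι' ι ℝ) (M22 : Matrix ι' ι' ℝ) (M23 : Matrix ι' κ ℝ)
    (M31 : Matrix κ ι ℝ) (M32 : Matrix κ ι' ℝ) (M33 : Matrix κ κ ℝ)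
    (x : ι → ℝ) (y : ι' → ℝ) (w : κ → ℝ) :
    Sum.elim x (Sum.elim y w) ⬝ᵥ
        (blk3 M11 M12 M13 M21 M22 M23 M31 M32 M33 *ᵥ Sum.elim x (Sum.elim y w)) =
      x ⬝ᵥ (M11 *ᵥ x) + x ⬝ᵥ (M12 *ᵥ y) + x ⬝ᵥ (M13 *ᵥ w)
      + y ⬝ᵥ (M21 *ᵥ x) + y ⬝ᵥ (M22 *ᵥ y) + y ⬝ᵥ (M23 *ᵥ w)
      + w ⬝ᵥ (M31 *ᵥ x) + w ⬝ᵥ (M32 *ᵥ y) + w ⬝ᵥ (M33 *ᵥ w) := by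
  simp only [dotProduct, mulVec, blk3, fromBlocks, of_apply, Fintype.sum_sum_type, Sum.elim_inl,
    Sum.elim_inr, mul_add, Finset.mul_sum, Finset.sum_add_distrib]
  ring

def augmentedVec (x : ι → ℝ) (w : κ → ℝ) : ι ⊕ (Fin 1 ⊕ κ) → ℝ :=
  Sum.elim x (Sum.elim 1 w)

def lyapunovRateMatrix (A Q : Matrix ι ι ℝ) (B : Matrix ι κ ℝ) :
    Matrix (ι ⊕ (Fin 1 ⊕ κ)) (ι ⊕ (Fin 1 ⊕ κ)) ℝ :=
  blk3 (Aᵀ * Q + Q * A) 0 (Q * B) 0 0 0 (Bᵀ * Q) 0 0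

def stateEllipsoidMatrix (Q : Matrix ι ι ℝ) : Matrix (ι ⊕ (Fin 1 ⊕ κ)) (ι ⊕ (Fin 1 ⊕ κ)) ℝ :=
  blk3 Q 0 0 0 (sc (-1)) 0 0 0 0

def inputEllipsoidMatrix (R : Matrix κ κ ℝ) (ubar : κ → ℝ) :
    Matrix (ι ⊕ (Fin 1 ⊕ κ)) (ι ⊕ (Fin 1 ⊕ κ)) ℝ :=
  blk3 0 0 0 0 (sc (1 - ubar ⬝ᵥ (R *ᵥ ubar))) (rowV (ubar ᵥ* R)) 0 (colV (R *ᵥ ubar)) (-R)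

lemma quadForm_lyapunovRateMatrix (A Q : Matrix ι ι ℝ) (B : Matrix ι κ ℝ)
    (x : ι → ℝ) (w : κ → ℝ) :
    augmentedVec x w ⬝ᵥ (lyapunovRateMatrix A Q B *ᵥ augmentedVec x w) =
      (A *ᵥ x + B *ᵥ w) ⬝ᵥ (Q *ᵥ x) + x ⬝ᵥ (Q *ᵥ (A *ᵥ x + B *ᵥ w)) := by
  rw [augmentedVec, lyapunovRateMatrix, dotProduct_blk3_mulVec]
  simp only [zero_mulVec, dotProduct_zero, add_zero, add_mulVec, ← mulVec_mulVec, dotProduct_add,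
    add_dotProduct, mulVec_add, dotProduct_transpose_mulVec]
  rw [dotProduct_comm (A *ᵥ x), dotProduct_comm (B *ᵥ w)]
  ring

lemma quadForm_stateEllipsoidMatrix (Q : Matrix ι ι ℝ) (x : ι → ℝ) (w : κ → ℝ) :
    augmentedVec x w ⬝ᵥ (stateEllipsoidMatrix Q *ᵥ augmentedVec x w) = x ⬝ᵥ (Q *ᵥ x) - 1 := by
  rw [augmentedVec, stateEllipsoidMatrix, dotProduct_blk3_mulVec]
  simp [sc, dotProduct, mulVec, sub_eq_add_neg]

lemma quadForm_inputEllipsoidMatrix (R : Matrix κ κ ℝ) (ubar : κ → ℝ)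
    (x : ι → ℝ) (w : κ → ℝ) :
    augmentedVec x w ⬝ᵥ (inputEllipsoidMatrix R ubar *ᵥ augmentedVec x w) =
      1 - (w - ubar) ⬝ᵥ (R *ᵥ (w - ubar)) := by
  rw [augmentedVec, inputEllipsoidMatrix, dotProduct_blk3_mulVec]
  have hrow : (1 : Fin 1 → ℝ) ⬝ᵥ (rowV (ubar ᵥ* R) *ᵥ w) = ubar ⬝ᵥ (R *ᵥ w) := by
    rw [dotProduct_mulVec ubar]
    simp [rowV, mulVec, vecMul, dotProduct]
  have hcol : w ⬝ᵥ (colV (R *ᵥ ubar) *ᵥ 1) = w ⬝ᵥ (R *ᵥ ubar) := by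
    simp [colV, mulVec, dotProduct]
  have hsc : (1 : Fin 1 → ℝ) ⬝ᵥ (sc (1 - ubar ⬝ᵥ (R *ᵥ ubar)) *ᵥ 1) =
      1 - ubar ⬝ᵥ (R *ᵥ ubar) := by
    simp [sc, mulVec, dotProduct]
  simp only [zero_mulVec, dotProduct_zero, add_zero, zero_add, hrow, hcol, hsc, neg_mulVec,
    dotProduct_neg, mulVec_sub, dotProduct_sub, sub_dotProduct]
  ring

theorem lyapunovRate_le_of_posSemidef {A Q : Matrix ι ι ℝ} {B : Matrix ι κ ℝ}
    {R : Matrix κ κ ℝ} {ubar : κ → ℝ} {α β : ℝ} (hβ : 0 ≤ β)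
    (hLMI : (-lyapunovRateMatrix A Q B - α • stateEllipsoidMatrix Q -
      β • inputEllipsoidMatrix R ubar).PosSemidef)
    (x : ι → ℝ) {w : κ → ℝ} (hw : (w - ubar) ⬝ᵥ (R *ᵥ (w - ubar)) ≤ 1) :
    (A *ᵥ x + B *ᵥ w) ⬝ᵥ (Q *ᵥ x) + x ⬝ᵥ (Q *ᵥ (A *ᵥ x + B *ᵥ w)) ≤
      α * (1 - x ⬝ᵥ (Q *ᵥ x)) := by
  have hquad := hLMI.dotProduct_mulVec_nonneg (augmentedVec x w)
  simp only [star_trivial, sub_mulVec, neg_mulVec, smul_mulVec, dotProduct_sub, dotProduct_neg,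
    dotProduct_smul, smul_eq_mul, quadForm_lyapunovRateMatrix, quadForm_stateEllipsoidMatrix,
    quadForm_inputEllipsoidMatrix] at hquad
  linarith [mul_nonneg hβ (sub_nonneg.mpr hw)]

end BlockQuadraticForms

theorem invariant_ellipsoidal_set_nonstealthy_general {n m : ℕ}
    (Q A : Matrix (Fin n) (Fin n) ℝ) (B : Matrix (Fin n) (Fin m) ℝ)
    (R : Matrix (Fin m) (Fin m) ℝ) (ubar : Fin m → ℝ)
    (E F S : Matrix ((Fin n) ⊕ ((Fin 1) ⊕ (Fin m))) ((Fin n) ⊕ ((Fin 1) ⊕ (Fin m))) ℝ)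
    (hE : E = blk3 (Aᵀ * Q + Q * A) 0 (Q * B)
                   0 0 0
                   (Bᵀ * Q) 0 0)
    (hF : F = blk3 Q 0 0
                   0 (sc (-1)) 0
                   0 0 0)
    (hS : S = blk3 0 0 0
                   0 (sc (1 - ubar ⬝ᵥ (R *ᵥ ubar))) (rowV (ubar ᵥ* R))
                   0 (colV (R *ᵥ ubar)) (-R))
    (α β : ℝ) (hβ : 0 ≤ β)
    (hLMI : (-E - α • F - β • S).PosSemidef) :
    ∀ (t₀ : ℝ) (ζ : ℝ → Fin n → ℝ) (u : ℝ → Fin m → ℝ),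
      Differentiable ℝ ζ →
      (∀ t, t₀ ≤ t → deriv ζ t = A *ᵥ ζ t + B *ᵥ u t) →
      (∀ t, t₀ ≤ t → (u t - ubar) ⬝ᵥ (R *ᵥ (u t - ubar)) ≤ 1) →
      (ζ t₀) ⬝ᵥ (Q *ᵥ ζ t₀) ≤ 1 →
      ∀ t, t₀ ≤ t → (ζ t) ⬝ᵥ (Q *ᵥ ζ t) ≤ 1 := by
  intro t₀ ζ u hζ hode hu h₀ t ht
  subst hE hF hS
  have hV : ∀ s, HasDerivAt (fun s => ζ s ⬝ᵥ (Q *ᵥ ζ s))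
      (deriv ζ s ⬝ᵥ (Q *ᵥ ζ s) + ζ s ⬝ᵥ (Q *ᵥ deriv ζ s)) s := fun s =>
    (hζ s).hasDerivAt.dotProduct ((hζ s).hasDerivAt.const_mulVec Q)
  refine le_of_hasDerivAt_le_mul_sub (α := α) (fun s _ => hV s) (fun s hs => ?_) h₀ ht
  rw [hode s hs]
  exact lyapunovRate_le_of_posSemidef hβ hLMI (ζ s) (hu s hs)

/-- Non-stealthy variant of Lemma 1 (Remark 3). -/
theorem invariant_ellipsoidal_set_nonstealthy {n m : ℕ}
    (Q A : Matrix (Fin n) (Fin n) ℝ) (B : Matrix (Fin n) (Fin m) ℝ)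
    (R : Matrix (Fin m) (Fin m) ℝ) (ubar : Fin m → ℝ)
    (hQ : Q.PosDef) (hR : R.PosDef)
    (E F S : Matrix ((Fin n) ⊕ ((Fin 1) ⊕ (Fin m))) ((Fin n) ⊕ ((Fin 1) ⊕ (Fin m))) ℝ)
    (hE : E = blk3 (Aᵀ * Q + Q * A) 0 (Q * B)
                   0 0 0
                   (Bᵀ * Q) 0 0)
    (hF : F = blk3 Q 0 0
                   0 (sc (-1)) 0
                   0 0 0)
    (hS : S = blk3 0 0 0
                   0 (sc (1 - ubar ⬝ᵥ (R *ᵥ ubar))) (rowV (ubar ᵥ* R))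
                   0 (colV (R *ᵥ ubar)) (-R))
    (α β : ℝ) (hα : 0 ≤ α) (hβ : 0 ≤ β)
    (hLMI : (-E - α • F - β • S).PosSemidef) :
    ∀ (t₀ : ℝ) (ζ : ℝ → Fin n → ℝ) (u : ℝ → Fin m → ℝ),
      Differentiable ℝ ζ →
      (∀ t, t₀ ≤ t → deriv ζ t = A *ᵥ ζ t + B *ᵥ u t) →
      (∀ t, t₀ ≤ t → (u t - ubar) ⬝ᵥ (R *ᵥ (u t - ubar)) ≤ 1) →
      (ζ t₀) ⬝ᵥ (Q *ᵥ ζ t₀) ≤ 1 →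
      ∀ t, t₀ ≤ t → (ζ t) ⬝ᵥ (Q *ᵥ ζ t) ≤ 1 :=
  invariant_ellipsoidal_set_nonstealthy_general Q A B R ubar E F S hE hF hS α β hβ hLMI
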